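/- arXiv:1606.05596 — 2 statements merged into one kernel-verified Lean document; each statement's English description precedes it below -/
import Mathlib

section
/- Let β be a real number with β > 0 and β ≠ 1. Let p be a probability vector on Fin r and q be a probability vector on Fin c, and let p⊗q denote their product, the probability vector on Fin r × Fin c given by (p⊗q)(i,j) = p i · q j (the joint distribution of statistically independent variables). Then the Havrda–Charvat generalized entropy of order β satisfies H_β(p⊗q) = H_β(p) + H_β(q) - (1 - 2^(1-β)) · H_β(p) · H_β(q). -/
/-- The Havrda–Charvat generalized entropy of order `β` of a finitely
supported probability vector `p`. -/
noncomputable def havrdaCharvat {α : Type*} [Fintype α] (β : ℝ) (p : α → ℝ) : ℝ :=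
  (1 / (1 - (2 : ℝ) ^ (1 - β))) * (1 - ∑ i, (p i) ^ β)

theorem havrdaCharvat_prod {r c : ℕ} (β : ℝ) (hβ0 : 0 < β) (hβ1 : β ≠ 1)
    (p : Fin r → ℝ) (hp : ∀ i, 0 ≤ p i) (hp1 : ∑ i, p i = 1)
    (q : Fin c → ℝ) (hq : ∀ j, 0 ≤ q j) (hq1 : ∑ j, q j = 1) :
    havrdaCharvat β (fun ij : Fin r × Fin c => p ij.1 * q ij.2) =
      havrdaCharvat β p + havrdaCharvat β q -
        (1 - (2 : ℝ) ^ (1 - β)) * havrdaCharvat β p * havrdaCharvat β q := by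
  have hsum : ∑ ij : Fin r × Fin c, (p ij.1 * q ij.2) ^ β =
      (∑ i, (p i) ^ β) * (∑ j, (q j) ^ β) := by
    rw [Fintype.sum_prod_type, Finset.sum_mul_sum]
    exact Finset.sum_congr rfl fun i _ => Finset.sum_congr rfl fun j _ => Real.mul_rpow (hp i) (hq j)
  have hne : (1 : ℝ) - (2 : ℝ) ^ (1 - β) ≠ 0 := by
    have h2 : (2 : ℝ) ^ (1 - β) ≠ 1 := by
      rcases lt_or_gt_of_ne hβ1 with h | h
      · have : (1:ℝ) < 2 ^ (1 - β) :=
          Real.one_lt_rpow_iff_of_pos (by norm_num) |>.mpr (Or.inl ⟨by norm_num, by linarith⟩)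
        linarith
      · have : (2:ℝ) ^ (1 - β) < 1 :=
          Real.rpow_lt_one_of_one_lt_of_neg (by norm_num) (by linarith)
        linarith
    intro h; exact h2 (by linarith)
  unfold havrdaCharvat
  rw [hsum]
  field_simp
  ring
end

section
/- Let p be a probability vector on Fin r with p i > 0 for all i. Then the Havrda–Charvat generalized entropy H_β(p) = (1 - ∑ i, (p i)^β)/(1 - 2^(1-β)), viewed as a function of the real parameter β, tends to the base-2 Shannon entropy -∑ i, (p i) · logb 2 (p i) as β tends to 1 within the set {β : β ≠ 1}. -/
/-!
Both the numerator `1 - ∑ i, p i ^ β` and the denominator `1 - 2 ^ (1 - β)` of `H_β(p)` vanish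
at `β = 1`, so `H_β(p)` is the ratio of their difference quotients at `1`. These tend to the
derivatives `-∑ i, p i * log (p i)` and `log 2`, whose ratio is the base-2 Shannon entropy.
-/

open Filter Topology Real

theorem HasDerivAt.tendsto_div_nhdsNE_of_eq_zero {𝕜 : Type*} [NontriviallyNormedField 𝕜]
    {f g : 𝕜 → 𝕜} {f' g' a : 𝕜} (hf : HasDerivAt f f' a) (hg : HasDerivAt g g' a)
    (hfa : f a = 0) (hga : g a = 0) (hg' : g' ≠ 0) :
    Tendsto (fun x => f x / g x) (𝓝[≠] a) (𝓝 (f' / g')) := by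
  refine ((hasDerivAt_iff_tendsto_slope.mp hf).div (hasDerivAt_iff_tendsto_slope.mp hg)
    hg').congr' (eventually_nhdsWithin_of_forall fun x hx => ?_)
  rw [Pi.div_apply, slope_def_field, slope_def_field, hfa, hga, sub_zero, sub_zero,
    div_div_div_cancel_right₀ (sub_ne_zero.mpr hx)]

theorem hasDerivAt_sum_rpow {α : Type*} [Fintype α] {p : α → ℝ} (hp : ∀ i, 0 < p i) (x : ℝ) :
    HasDerivAt (fun β : ℝ => ∑ i, p i ^ β) (∑ i, p i ^ x * log (p i)) x := by
  simpa using HasDerivAt.fun_sum fun i _ => (hasStrictDerivAt_const_rpow (hp i) x).hasDerivAt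

theorem havrdaCharvat_eq_div {α : Type*} [Fintype α] (β : ℝ) (p : α → ℝ) :
    havrdaCharvat β p = (1 - ∑ i, p i ^ β) / (1 - 2 ^ (1 - β)) :=
  one_div_mul_eq_div _ _

theorem havrdaCharvat_tendsto_shannon {r : ℕ} (p : Fin r → ℝ)
    (hp : ∀ i, 0 < p i) (hp1 : ∑ i, p i = 1) :
    Filter.Tendsto (fun β : ℝ => havrdaCharvat β p)
      (nhdsWithin 1 {β : ℝ | β ≠ 1})
      (nhds (-∑ i, p i * Real.logb 2 (p i))) := by
  have hnum : HasDerivAt (fun β : ℝ => 1 - ∑ i, p i ^ β) (-∑ i, p i * log (p i)) 1 := by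
    simpa using (hasDerivAt_sum_rpow hp 1).const_sub 1
  have hden : HasDerivAt (fun β : ℝ => 1 - (2 : ℝ) ^ (1 - β)) (log 2) 1 := by
    simpa using (((hasDerivAt_id (1 : ℝ)).const_sub 1).const_rpow two_pos).const_sub 1
  have hlim := hnum.tendsto_div_nhdsNE_of_eq_zero hden (by simp [hp1]) (by simp)
    (log_pos one_lt_two).ne'
  simp_rw [havrdaCharvat_eq_div]
  rw [show -∑ i, p i * logb 2 (p i) = (-∑ i, p i * log (p i)) / log 2 by
    simp only [logb, neg_div, Finset.sum_div, mul_div_assoc]]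
  exact hlim
end
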